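/- arXiv:2101.05011 — 2 statements merged into one kernel-verified Lean document; each statement's English description precedes it below -/
import Mathlib

section
/- Let X, U, ∂X be Banach spaces, Z ⊂ X a dense subspace, A_m : Z → X a closed linear operator, and G : Z → ∂X a surjective linear operator such that the restriction A of A_m to ker G generates a C₀-semigroup on X. Then for every μ in the resolvent set of A, the restriction of G to ker(μ − A_m) is a bijection onto ∂X; i.e., for every u ∈ ∂X there exists a unique z ∈ Z with A_m z = μ z and G z = u. -/
/-- A strongly continuous semigroup of bounded operators (on `t ≥ 0`). -/
def IsC0Semigroup {X : Type*} [NormedAddCommGroup X] [NormedSpace ℂ X]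
    (T : ℝ → (X →L[ℂ] X)) : Prop :=
  T 0 = 1 ∧ (∀ s t : ℝ, 0 ≤ s → 0 ≤ t → T (s + t) = T s ∘L T t) ∧
    ∀ x : X, ContinuousOn (fun t => T t x) (Set.Ici (0 : ℝ))

/-!
If `z₀ ∈ Z` is any lift of `u` under `G`, correcting it by the resolvent of the homogeneous
problem, `z = z₀ - R ((μ - A_m) z₀)`, removes the defect `(μ - A_m) z₀` without changing the
boundary value, since `R` maps into `ker G`. Uniqueness holds because a solution of the homogeneous
problem `A_m z = μ z`, `G z = 0` lies in `D(A) = ker G` and is then killed by `R (μ - A) = id`.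
-/

section DirichletOperator

variable {𝕜 X U : Type*} [CommRing 𝕜] [AddCommGroup X] [Module 𝕜 X] [AddCommGroup U] [Module 𝕜 U]
  {Z : Submodule 𝕜 X} {Am : X →ₗ[𝕜] X} {G : X →ₗ[𝕜] U} {μ : 𝕜} {R : X →ₗ[𝕜] X}

theorem eq_zero_of_eigen_of_boundary_eq_zero
    (hR : ∀ z ∈ Z, G z = 0 → R (μ • z - Am z) = z)
    {z : X} (hzZ : z ∈ Z) (hAmz : Am z = μ • z) (hGz : G z = 0) : z = 0 := by
  rw [← hR z hzZ hGz, hAmz, sub_self, map_zero]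

theorem exists_eigen_with_boundary_value
    (hR : ∀ x : X, R x ∈ Z ∧ G (R x) = 0 ∧ μ • R x - Am (R x) = x)
    {z₀ : X} (hz₀Z : z₀ ∈ Z) :
    z₀ - R (μ • z₀ - Am z₀) ∈ Z ∧ Am (z₀ - R (μ • z₀ - Am z₀)) = μ • (z₀ - R (μ • z₀ - Am z₀)) ∧
      G (z₀ - R (μ • z₀ - Am z₀)) = G z₀ := by
  obtain ⟨hRZ, hGR, hres⟩ := hR (μ • z₀ - Am z₀)
  refine ⟨Z.sub_mem hz₀Z hRZ, ?_, by rw [map_sub, hGR, sub_zero]⟩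
  rw [map_sub, smul_sub]
  linear_combination (norm := module) hres

theorem existsUnique_eigen_with_boundary_value
    (hGsurj : ∀ u : U, ∃ z ∈ Z, G z = u)
    (hR1 : ∀ x : X, R x ∈ Z ∧ G (R x) = 0 ∧ μ • R x - Am (R x) = x)
    (hR2 : ∀ z ∈ Z, G z = 0 → R (μ • z - Am z) = z) (u : U) :
    ∃! z : X, z ∈ Z ∧ Am z = μ • z ∧ G z = u := by
  obtain ⟨z₀, hz₀Z, rfl⟩ := hGsurj u
  refine ⟨_, exists_eigen_with_boundary_value hR1 hz₀Z, ?_⟩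
  rintro z ⟨hzZ, hAmz, hGz⟩
  obtain ⟨hz₁Z, hAmz₁, hGz₁⟩ := exists_eigen_with_boundary_value hR1 hz₀Z
  refine sub_eq_zero.mp (eq_zero_of_eigen_of_boundary_eq_zero hR2 (Z.sub_mem hzZ hz₁Z) ?_ ?_)
  · rw [map_sub, hAmz, hAmz₁, ← smul_sub]
  · rw [map_sub, hGz, hGz₁, sub_self]

end DirichletOperator

theorem stmt_3_general {X U : Type*} [NormedAddCommGroup X] [NormedSpace ℂ X]
    [NormedAddCommGroup U] [NormedSpace ℂ U]
    (Z : Submodule ℂ X)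
    (Am : X →ₗ[ℂ] X) (G : X →ₗ[ℂ] U)
    (hGsurj : ∀ u : U, ∃ z ∈ Z, G z = u)
    -- `μ` belongs to the resolvent set of `A`, with resolvent `R`:
    (μ : ℂ) (R : X →L[ℂ] X)
    (hR1 : ∀ x : X, R x ∈ Z ∧ G (R x) = 0 ∧ μ • R x - Am (R x) = x)
    (hR2 : ∀ z ∈ Z, G z = 0 → R (μ • z - Am z) = z) :
    ∀ u : U, ∃! z : X, z ∈ Z ∧ Am z = μ • z ∧ G z = u :=
  existsUnique_eigen_with_boundary_value (R := R.toLinearMap) hGsurj hR1 hR2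

/-- In the boundary control setting, for every `μ` in the resolvent set of
`A = A_m|_{ker G}`, the restriction of `G` to `ker (μ - A_m)` is a bijection onto `∂X`. -/
theorem stmt_3 {X U : Type*} [NormedAddCommGroup X] [NormedSpace ℂ X] [CompleteSpace X]
    [NormedAddCommGroup U] [NormedSpace ℂ U] [CompleteSpace U]
    (Z : Submodule ℂ X) (hZdense : Dense (Z : Set X))
    (Am : X →ₗ[ℂ] X) (G : X →ₗ[ℂ] U)
    (hclosed : IsClosed {q : X × X | q.1 ∈ Z ∧ Am q.1 = q.2})
    (hGbdd : ∃ c : ℝ, ∀ z ∈ Z, ‖G z‖ ≤ c * (‖z‖ + ‖Am z‖))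
    (hGsurj : ∀ u : U, ∃ z ∈ Z, G z = u)
    (T : ℝ → (X →L[ℂ] X)) (hT : IsC0Semigroup T)
    (hgen : ∀ z ∈ Z, G z = 0 → HasDerivWithinAt (fun t => T t z) (Am z) (Set.Ici 0) 0)
    -- `μ` belongs to the resolvent set of `A`, with resolvent `R`:
    (μ : ℂ) (R : X →L[ℂ] X)
    (hR1 : ∀ x : X, R x ∈ Z ∧ G (R x) = 0 ∧ μ • R x - Am (R x) = x)
    (hR2 : ∀ z ∈ Z, G z = 0 → R (μ • z - Am z) = z) :
    ∀ u : U, ∃! z : X, z ∈ Z ∧ Am z = μ • z ∧ G z = u :=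
  stmt_3_general Z Am G hGsurj μ R hR1 hR2
end

section
/- Consider the 2×2 operator block relation: suppose μ ∈ ρ(A), D_μ is the Dirichlet operator, and M : Z → ∂X a bounded operator (for the graph norm). If 1 ∈ ρ(M D_μ) (i.e., I_{∂X} − M D_μ is invertible), then μ belongs to the resolvent set of A_{G,M} := A_m with domain {z ∈ Z : G z = M z}, and R(μ, A_{G,M}) = (I + D_μ (I_{∂X} − M D_μ)^{-1} M) R(μ, A). Moreover R(μ, A_{G,M}) B K = D_μ (I − M D_μ)^{-1} K for any bounded K into ∂X, where B = (μ−A_{-1})D_μ. -/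
/-! The perturbed problem `μ y - A_m y = x`, `G y = M y` is solved by correcting `R(μ, A) x`,
which has zero boundary value, with the `μ`-harmonic function `D_μ u` whose boundary defect
`(I - M D_μ)` cancels the boundary datum `M R(μ, A) x`; that is, `u = (I - M D_μ)⁻¹ M R(μ, A) x`.
Uniqueness holds because a `μ`-harmonic `w = D_μ (G w)` with `G w = M w` has boundary value in the
kernel of `I - M D_μ`, hence zero. -/

section BoundaryPerturbation

variable {𝕜 X U : Type*} [Ring 𝕜] [AddCommGroup X] [Module 𝕜 X] [AddCommGroup U] [Module 𝕜 U]
  {Z : Submodule 𝕜 X} {Am : X →ₗ[𝕜] X} {G M : X →ₗ[𝕜] U} {μ : 𝕜} {D : U →ₗ[𝕜] X}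
  {V : U →ₗ[𝕜] U}

theorem dirichlet_comp_inverse_solves
    (hD : ∀ u : U, D u ∈ Z ∧ Am (D u) = μ • D u ∧ G (D u) = u)
    (hV : ∀ u : U, V u - M (D (V u)) = u) (u : U) :
    D (V u) ∈ Z ∧ Am (D (V u)) = μ • D (V u) ∧ G (D (V u)) - M (D (V u)) = u := by
  obtain ⟨hZ, hAm, hG⟩ := hD (V u)
  exact ⟨hZ, hAm, by rw [hG]; exact hV u⟩

theorem add_dirichlet_comp_inverse_solves
    (hD : ∀ u : U, D u ∈ Z ∧ Am (D u) = μ • D u ∧ G (D u) = u)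
    (hV : ∀ u : U, V u - M (D (V u)) = u) {r x : X}
    (hr : r ∈ Z ∧ G r = 0 ∧ μ • r - Am r = x) :
    r + D (V (M r)) ∈ Z ∧ G (r + D (V (M r))) = M (r + D (V (M r))) ∧
      μ • (r + D (V (M r))) - Am (r + D (V (M r))) = x := by
  obtain ⟨hrZ, hrG, hrx⟩ := hr
  obtain ⟨hdZ, hdAm, hdG⟩ := dirichlet_comp_inverse_solves hD hV (M r)
  refine ⟨Z.add_mem hrZ hdZ, ?_, ?_⟩
  · rw [map_add, map_add, hrG, zero_add]
    exact eq_add_of_sub_eq hdG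
  · rw [map_add, hdAm, smul_add, add_sub_add_right_eq_sub, hrx]

theorem eq_zero_of_harmonic_of_boundary_eq
    (hD : ∀ z ∈ Z, Am z = μ • z → z = D (G z)) (hV : ∀ u : U, V (u - M (D u)) = u)
    {w : X} (hwZ : w ∈ Z) (hwG : G w = M w) (hwAm : Am w = μ • w) : w = 0 := by
  have hw : w = D (M w) := hwG ▸ hD w hwZ hwAm
  have hMw : M w = 0 := by
    rw [← hV (M w), ← hw, sub_self, map_zero]
  rw [hw, hMw, map_zero]

theorem eq_of_perturbed_solutions
    (hD : ∀ z ∈ Z, Am z = μ • z → z = D (G z)) (hV : ∀ u : U, V (u - M (D u)) = u)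
    {x y z : X} (hy : y ∈ Z ∧ G y = M y ∧ μ • y - Am y = x)
    (hz : z ∈ Z ∧ G z = M z ∧ μ • z - Am z = x) : z = y := by
  obtain ⟨hyZ, hyG, hyx⟩ := hy
  obtain ⟨hzZ, hzG, hzx⟩ := hz
  refine sub_eq_zero.mp (eq_zero_of_harmonic_of_boundary_eq hD hV (Z.sub_mem hzZ hyZ)
    (by rw [map_sub, map_sub, hzG, hyG]) ?_)
  rw [map_sub, smul_sub]
  exact (sub_eq_sub_iff_sub_eq_sub.mp (hzx.trans hyx.symm)).symm

end BoundaryPerturbation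

theorem stmt_19_general {X U : Type*} [NormedAddCommGroup X] [NormedSpace ℂ X]
    [NormedAddCommGroup U] [NormedSpace ℂ U]
    (Z : Submodule ℂ X)
    (Am : X →ₗ[ℂ] X) (G Mb : X →ₗ[ℂ] U)
    -- `μ` in the resolvent set of `A = A_m|_{ker G}`, with resolvent `R`:
    (μ : ℂ) (R : X →L[ℂ] X)
    (hR1 : ∀ x : X, R x ∈ Z ∧ G (R x) = 0 ∧ μ • R x - Am (R x) = x)
    -- the Dirichlet operator `D_μ`, inverse of `G` on `ker (μ - A_m)`:
    (D : U →ₗ[ℂ] X)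
    (hD : ∀ u : U, D u ∈ Z ∧ Am (D u) = μ • D u ∧ G (D u) = u)
    (hD2 : ∀ z ∈ Z, Am z = μ • z → z = D (G z))
    -- `V = (I_{∂X} - M D_μ)⁻¹`, i.e. `1 ∈ ρ(M D_μ)`:
    (V : U →ₗ[ℂ] U)
    (hV1 : ∀ u : U, V u - Mb (D (V u)) = u)
    (hV2 : ∀ u : U, V (u - Mb (D u)) = u) :
    (∀ x : X,
      (R x + D (V (Mb (R x))) ∈ Z ∧
        G (R x + D (V (Mb (R x)))) = Mb (R x + D (V (Mb (R x)))) ∧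
        μ • (R x + D (V (Mb (R x)))) - Am (R x + D (V (Mb (R x)))) = x) ∧
      ∀ z : X, z ∈ Z → G z = Mb z → μ • z - Am z = x →
        z = R x + D (V (Mb (R x)))) ∧
    (∀ u : U, D (V u) ∈ Z ∧ Am (D (V u)) = μ • D (V u) ∧
      G (D (V u)) - Mb (D (V u)) = u) := by
  refine ⟨fun x => ?_, dirichlet_comp_inverse_solves hD hV1⟩
  have hsol := add_dirichlet_comp_inverse_solves hD hV1 (hR1 x)
  exact ⟨hsol, fun z hzZ hzG hzx => eq_of_perturbed_solutions hD2 hV2 hsol ⟨hzZ, hzG, hzx⟩⟩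

/-- If `1 ∈ ρ(M D_μ)`, then `μ` is in the resolvent set of `A_{G,M} = A_m` with domain
`{z ∈ Z : G z = M z}`, and `R(μ, A_{G,M}) = (I + D_μ (I - M D_μ)⁻¹ M) R(μ,A)`; moreover
`R(μ, A_{G,M}) B K = D_μ (I - M D_μ)⁻¹ K`, expressed by the property that for every
boundary value `u`, `y = D_μ (I - M D_μ)⁻¹ u` solves `A_m y = μ y`, `G y - M y = u`. -/
theorem stmt_19 {X U : Type*} [NormedAddCommGroup X] [NormedSpace ℂ X] [CompleteSpace X]
    [NormedAddCommGroup U] [NormedSpace ℂ U] [CompleteSpace U]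
    (Z : Submodule ℂ X) (hZdense : Dense (Z : Set X))
    (Am : X →ₗ[ℂ] X) (G Mb : X →ₗ[ℂ] U)
    (hGsurj : ∀ u : U, ∃ z ∈ Z, G z = u)
    -- `μ` in the resolvent set of `A = A_m|_{ker G}`, with resolvent `R`:
    (μ : ℂ) (R : X →L[ℂ] X)
    (hR1 : ∀ x : X, R x ∈ Z ∧ G (R x) = 0 ∧ μ • R x - Am (R x) = x)
    (hR2 : ∀ z ∈ Z, G z = 0 → R (μ • z - Am z) = z)
    -- the Dirichlet operator `D_μ`, inverse of `G` on `ker (μ - A_m)`: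
    (D : U →ₗ[ℂ] X)
    (hD : ∀ u : U, D u ∈ Z ∧ Am (D u) = μ • D u ∧ G (D u) = u)
    (hD2 : ∀ z ∈ Z, Am z = μ • z → z = D (G z))
    -- `V = (I_{∂X} - M D_μ)⁻¹`, i.e. `1 ∈ ρ(M D_μ)`:
    (V : U →ₗ[ℂ] U)
    (hV1 : ∀ u : U, V u - Mb (D (V u)) = u)
    (hV2 : ∀ u : U, V (u - Mb (D u)) = u) :
    (∀ x : X,
      (R x + D (V (Mb (R x))) ∈ Z ∧
        G (R x + D (V (Mb (R x)))) = Mb (R x + D (V (Mb (R x)))) ∧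
        μ • (R x + D (V (Mb (R x)))) - Am (R x + D (V (Mb (R x)))) = x) ∧
      ∀ z : X, z ∈ Z → G z = Mb z → μ • z - Am z = x →
        z = R x + D (V (Mb (R x)))) ∧
    (∀ u : U, D (V u) ∈ Z ∧ Am (D (V u)) = μ • D (V u) ∧
      G (D (V u)) - Mb (D (V u)) = u) :=
  stmt_19_general Z Am G Mb μ R hR1 D hD hD2 V hV1 hV2
end
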